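/- arXiv:2010.10190 — 2 statements merged into one kernel-verified Lean document; each statement's English description precedes it below -/
import Mathlib

section
/- Let a, b, r, δ > 0. Suppose that for every point u on the boundary ellipse ∂E(a,b) and every point w on the boundary ellipse ∂E(a+δ, b+δ) one has ‖u − w‖ ≥ r. Then the Minkowski sum E(a,b) + closedBall(0,r) is contained in E(a+δ, b+δ); i.e., the ellipse enlarged by δ in both semi-axes bounds the collision space of the elliptical obstacle with a disc of radius r. -/
open Pointwise

/-- The solid ellipse with semi-axes `a` and `b`, centered at the origin of `ℝ²`. -/
def ellipse (a b : ℝ) : Set (EuclideanSpace ℝ (Fin 2)) :=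
  {p | (p 0) ^ 2 / a ^ 2 + (p 1) ^ 2 / b ^ 2 ≤ 1}

/-- The boundary of the solid ellipse with semi-axes `a` and `b`. -/
def ellipseBoundary (a b : ℝ) : Set (EuclideanSpace ℝ (Fin 2)) :=
  {p | (p 0) ^ 2 / a ^ 2 + (p 1) ^ 2 / b ^ 2 = 1}



lemma aux_shrink (a b δ x y : ℝ) (ha : 0 < a) (hb : 0 < b) (hδ : 0 < δ)
    (h : x ^ 2 / a ^ 2 + y ^ 2 / b ^ 2 ≤ 1) :
    x ^ 2 / (a + δ) ^ 2 + y ^ 2 / (b + δ) ^ 2 < 1 := by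
  have ha' : (0:ℝ) < (a+δ)^2 := by positivity
  have hb' : (0:ℝ) < (b+δ)^2 := by positivity
  have e1 : x ^ 2 / (a + δ) ^ 2 = (x ^ 2 / a ^ 2) * (a ^ 2 / (a + δ) ^ 2) := by
    field_simp
  have e2 : y ^ 2 / (b + δ) ^ 2 = (y ^ 2 / b ^ 2) * (b ^ 2 / (b + δ) ^ 2) := by
    field_simp
  set m : ℝ := max (a ^ 2 / (a + δ) ^ 2) (b ^ 2 / (b + δ) ^ 2) with hm
  have hc : a ^ 2 / (a + δ) ^ 2 ≤ m := le_max_left _ _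
  have hd : b ^ 2 / (b + δ) ^ 2 ≤ m := le_max_right _ _
  have hm1 : m < 1 := by
    apply max_lt <;> rw [div_lt_one (by positivity)] <;> nlinarith
  have hm0 : 0 ≤ m := le_trans (by positivity) hc
  have hx : 0 ≤ x ^ 2 / a ^ 2 := by positivity
  have hy : 0 ≤ y ^ 2 / b ^ 2 := by positivity
  nlinarith [mul_le_mul_of_nonneg_left hc hx, mul_le_mul_of_nonneg_left hd hy]

lemma aux_grow (a b δ x y : ℝ) (ha : 0 < a) (hb : 0 < b) (hδ : 0 < δ)
    (h : x ^ 2 / (a + δ) ^ 2 + y ^ 2 / (b + δ) ^ 2 = 1) :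
    1 < x ^ 2 / a ^ 2 + y ^ 2 / b ^ 2 := by
  by_contra hle
  push_neg at hle
  have := aux_shrink a b δ x y ha hb hδ hle
  linarith

set_option maxHeartbeats 1600000 in
/-- If every point of `∂E(a,b)` is at distance at least `r` from every point of
`∂E(a+δ, b+δ)`, then the Minkowski sum `E(a,b) + closedBall(0,r)` is contained in
`E(a+δ, b+δ)`. -/
theorem minkowski_sum_subset_of_boundary_dist_ge
    (a b r δ : ℝ) (ha : 0 < a) (hb : 0 < b) (hr : 0 < r) (hδ : 0 < δ)
    (hsep : ∀ u ∈ ellipseBoundary a b, ∀ w ∈ ellipseBoundary (a + δ) (b + δ),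
      r ≤ ‖u - w‖) :
    ellipse a b + Metric.closedBall (0 : EuclideanSpace ℝ (Fin 2)) r ⊆
      ellipse (a + δ) (b + δ) := by
  rintro x hx
  obtain ⟨p, hp, q, hq, rfl⟩ := Set.mem_add.mp hx
  rw [Metric.mem_closedBall, dist_zero_right] at hq
  simp only [ellipse, Set.mem_setOf_eq] at hp ⊢
  by_contra hout
  push_neg at hout
  -- g t = F_big(p + t q)
  set g : ℝ → ℝ := fun t =>
    (p 0 + t * q 0) ^ 2 / (a + δ) ^ 2 + (p 1 + t * q 1) ^ 2 / (b + δ) ^ 2 with hg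
  have hgc : Continuous g := by fun_prop
  have hg0 : g 0 < 1 := by
    simpa [hg] using aux_shrink a b δ (p 0) (p 1) ha hb hδ hp
  have hg1 : 1 < g 1 := by
    have h0 : (p + q) 0 = p 0 + q 0 := rfl
    have h1 : (p + q) 1 = p 1 + q 1 := rfl
    simp only [hg]
    rw [h0, h1] at hout
    simpa using hout
  obtain ⟨t, htmem, hgt⟩ := intermediate_value_Icc (by norm_num : (0:ℝ) ≤ 1)
    hgc.continuousOn ⟨hg0.le, hg1.le⟩
  obtain ⟨ht0, ht1⟩ := htmem
  have ht1' : t < 1 := lt_of_le_of_ne ht1 (by rintro rfl; exact absurd hgt hg1.ne')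
  -- w := p + t • q
  set w : EuclideanSpace ℝ (Fin 2) := p + t • q with hw
  have hw0 : w 0 = p 0 + t * q 0 := rfl
  have hw1 : w 1 = p 1 + t * q 1 := rfl
  have hwB : w ∈ ellipseBoundary (a + δ) (b + δ) := by
    simp only [ellipseBoundary, Set.mem_setOf_eq, hw0, hw1]
    exact hgt
  -- F_small(w) > 1
  have hws : 1 < (w 0) ^ 2 / a ^ 2 + (w 1) ^ 2 / b ^ 2 :=
    aux_grow a b δ (w 0) (w 1) ha hb hδ hwB
  -- h s = F_small(p + s (w - p))
  set f : ℝ → ℝ := fun s =>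
    (p 0 + s * (w 0 - p 0)) ^ 2 / a ^ 2 + (p 1 + s * (w 1 - p 1)) ^ 2 / b ^ 2 with hf
  have hfc : Continuous f := by fun_prop
  have hf0 : f 0 ≤ 1 := by simpa [hf] using hp
  have hf1 : 1 < f 1 := by simpa [hf] using hws
  obtain ⟨s, hsmem, hfs⟩ := intermediate_value_Icc (by norm_num : (0:ℝ) ≤ 1)
    hfc.continuousOn ⟨hf0, hf1.le⟩
  obtain ⟨hs0, hs1⟩ := hsmem
  set u : EuclideanSpace ℝ (Fin 2) := p + s • (w - p) with hu
  have hu0 : u 0 = p 0 + s * (w 0 - p 0) := rfl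
  have hu1 : u 1 = p 1 + s * (w 1 - p 1) := rfl
  have huB : u ∈ ellipseBoundary a b := by
    simp only [ellipseBoundary, Set.mem_setOf_eq, hu0, hu1]
    exact hfs
  have key := hsep u huB w hwB
  -- ‖u - w‖ = (1-s) * ‖w - p‖ ≤ ‖w - p‖ = t * ‖q‖ < r
  have hwp : ‖w - p‖ = t * ‖q‖ := by
    have : w - p = t • q := by rw [hw]; abel
    rw [this, norm_smul, Real.norm_eq_abs, abs_of_nonneg ht0]
  have huw : ‖u - w‖ = (1 - s) * ‖w - p‖ := by
    have : u - w = (1 - s) • (p - w) := by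
      rw [hu]
      module
    rw [this, norm_smul, Real.norm_eq_abs, abs_of_nonneg (by linarith), norm_sub_rev]
  have hlt : ‖u - w‖ < r := by
    rw [huw, hwp]
    have h1 : (1 - s) * (t * ‖q‖) ≤ t * ‖q‖ := by
      nlinarith [mul_nonneg hs0 (mul_nonneg ht0 (norm_nonneg q))]
    have h2 : t * ‖q‖ < r := by
      have h3 : t * ‖q‖ ≤ t * r := mul_le_mul_of_nonneg_left hq ht0
      nlinarith
    linarith
  linarith
end

section
/- Let a, b, r > 0 with a ≠ b. Then the naive approximation of the Minkowski sum of the ellipse and the disc by the ellipse with semi-axes a + r and b + r is not correct: there exist p ∈ E(a,b) and q ∈ ℝ² with ‖q‖ ≤ r such that p + q ∉ E(a+r, b+r). In other words, E(a,b) + closedBall(0,r) is not contained in E(a+r, b+r). -/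
open Pointwise

/-! The Minkowski sum `E(a,b) + closedBall(0,r)` is the set of points at distance `≤ r` from
`E(a,b)`, so it reaches `r` beyond the ellipse along every normal. At the boundary point
`p = (a², b²)/√(a²+b²)` the normal is the diagonal direction, where `x + y = √(a²+b²)`; moving `r`
along it gives `x + y = √(a²+b²) + √2 r`. By Cauchy–Schwarz, `x + y ≤ √(A²+B²)` on `E(A,B)`,
and `√(a²+b²) + √2 r > √((a+r)²+(b+r)²)` exactly because `√2 · √(a²+b²) > a + b` for `a ≠ b`. -/

lemma sq_add_le_of_mem_ellipse {A B : ℝ} (hA : A ≠ 0) (hB : B ≠ 0)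
    {p : EuclideanSpace ℝ (Fin 2)} (hp : p ∈ ellipse A B) :
    (p 0 + p 1) ^ 2 ≤ A ^ 2 + B ^ 2 := by
  obtain ⟨u, hu⟩ : ∃ u, p 0 = A * u := ⟨p 0 / A, by field_simp⟩
  obtain ⟨v, hv⟩ : ∃ v, p 1 = B * v := ⟨p 1 / B, by field_simp⟩
  have huv : u ^ 2 + v ^ 2 ≤ 1 := by
    simpa [ellipse, hu, hv, mul_pow, hA, hB] using hp
  rw [hu, hv]
  nlinarith [sq_nonneg (A * v - B * u), sq_nonneg A, sq_nonneg B]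

lemma exists_mem_ellipse_coord_add_eq {a b : ℝ} (ha : a ≠ 0) :
    ∃ p ∈ ellipse a b, p 0 + p 1 = √(a ^ 2 + b ^ 2) := by
  set s := √(a ^ 2 + b ^ 2)
  have hs2 : s ^ 2 = a ^ 2 + b ^ 2 := Real.sq_sqrt (by positivity)
  have hs : s ≠ 0 := (Real.sqrt_pos.2 (by positivity)).ne'
  have hscale (x : ℝ) : (x ^ 2 / s) ^ 2 / x ^ 2 = x ^ 2 / s ^ 2 := by
    rcases eq_or_ne x 0 with rfl | hx
    · simp
    · field_simp
  refine ⟨!₂[a ^ 2 / s, b ^ 2 / s], ?_, ?_⟩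
  · change (a ^ 2 / s) ^ 2 / a ^ 2 + (b ^ 2 / s) ^ 2 / b ^ 2 ≤ 1
    rw [hscale, hscale, ← add_div, ← hs2, div_self (pow_ne_zero 2 hs)]
  · change a ^ 2 / s + b ^ 2 / s = s
    rw [← add_div, ← hs2, sq, mul_div_cancel_right₀ _ hs]

lemma exists_norm_eq_coord_add_eq {r : ℝ} (hr : 0 ≤ r) :
    ∃ q : EuclideanSpace ℝ (Fin 2), ‖q‖ = r ∧ q 0 + q 1 = √2 * r := by
  have h2 : √2 ^ 2 = 2 := Real.sq_sqrt (by norm_num)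
  refine ⟨!₂[r / √2, r / √2], ?_, ?_⟩
  · rw [EuclideanSpace.norm_eq, Fin.sum_univ_two]
    simp [div_pow, h2, Real.sqrt_sq hr]
  · change r / √2 + r / √2 = √2 * r
    field_simp
    rw [h2]; ring

lemma sq_add_add_sq_add_lt {a b r : ℝ} (hab : a ≠ b) (hr : 0 < r) :
    (a + r) ^ 2 + (b + r) ^ 2 < (√(a ^ 2 + b ^ 2) + √2 * r) ^ 2 := by
  set s := √(a ^ 2 + b ^ 2)
  have hs2 : s ^ 2 = a ^ 2 + b ^ 2 := Real.sq_sqrt (by positivity)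
  have h2 : √2 ^ 2 = 2 := Real.sq_sqrt (by norm_num)
  have hsum : a + b < √2 * s := by
    refine lt_of_pow_lt_pow_left₀ 2 (by positivity) ?_
    rw [mul_pow, h2, hs2]
    nlinarith [sq_pos_of_ne_zero (sub_ne_zero.2 hab)]
  calc (a + r) ^ 2 + (b + r) ^ 2 = s ^ 2 + 2 * r * (a + b) + 2 * r ^ 2 := by rw [hs2]; ring
    _ < s ^ 2 + 2 * r * (√2 * s) + √2 ^ 2 * r ^ 2 := by rw [h2]; gcongr
    _ = (s + √2 * r) ^ 2 := by ring

/-- For `a ≠ b`, the naive enlargement of the ellipse by `r` in both semi-axes does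
not bound the Minkowski sum of the ellipse with the disc of radius `r`: there are
`p ∈ E(a,b)` and `q` with `‖q‖ ≤ r` such that `p + q ∉ E(a+r, b+r)`. -/
theorem naive_enlargement_incorrect
    (a b r : ℝ) (ha : 0 < a) (hb : 0 < b) (hr : 0 < r) (hab : a ≠ b) :
    (∃ p ∈ ellipse a b, ∃ q : EuclideanSpace ℝ (Fin 2),
      ‖q‖ ≤ r ∧ p + q ∉ ellipse (a + r) (b + r)) ∧
    ¬ (ellipse a b + Metric.closedBall (0 : EuclideanSpace ℝ (Fin 2)) r ⊆
        ellipse (a + r) (b + r)) := by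
  obtain ⟨p, hp, hp_add⟩ := exists_mem_ellipse_coord_add_eq (b := b) ha.ne'
  obtain ⟨q, hq, hq_add⟩ := exists_norm_eq_coord_add_eq hr.le
  have hpq_add : (p + q) 0 + (p + q) 1 = √(a ^ 2 + b ^ 2) + √2 * r := by
    simp only [PiLp.add_apply]
    linarith
  have hpq : p + q ∉ ellipse (a + r) (b + r) := fun h => by
    have := sq_add_le_of_mem_ellipse (by positivity) (by positivity) h
    rw [hpq_add] at this
    exact (sq_add_add_sq_add_lt hab hr).not_ge this
  exact ⟨⟨p, hp, q, hq.le, hpq⟩, fun hsub =>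
    hpq (hsub (Set.add_mem_add hp (mem_closedBall_zero_iff.2 hq.le)))⟩
end
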